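/- There exists an injective Lie algebra homomorphism f : g− → sp(6,ℝ) such that f(e₁), f(e₂) ∈ s₋₂, f(e₀), f(e₂′) ∈ s₋₁, f(e₁′) ∈ s₋₁ + s₀, and f(g−) ∩ (s₀ + s₁ + s₂) = 0. In particular f preserves the filtrations in the sense that f(g₋₁) ⊆ s₋₁ + s₀ + s₁ + s₂, f(g₋₁ ⊕ g₋₂) ⊆ s₋₂ + s₋₁ + s₀ + s₁ + s₂, and f induces an injection of g− into the quotient sp(6,ℝ)/(s₀ + s₁ + s₂). (This is the filtered Lie algebra embedding underlying the Pfaffian embedding of the flat (2,3,5)-model into the isotropic Grassmannian.) -/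
import Mathlib


noncomputable section

open Module

/-- The bracket of the (2,3,5) symbol algebra `g₋ = ℝ⁵`, in the basis
`e₁, e₂, e₀, e₁′, e₂′` (coordinates `0,…,4`), determined by
`[e₁′,e₂′] = 2e₀`, `[e₀,e₁′] = 3e₁`, `[e₀,e₂′] = 3e₂`, all other brackets zero. -/
def gBr (x y : Fin 5 → ℝ) : Fin 5 → ℝ :=
  ![3 * (x 2 * y 3 - x 3 * y 2), 3 * (x 2 * y 4 - x 4 * y 2),
    2 * (x 3 * y 4 - x 4 * y 3), 0, 0]

/-- `g₋₁ = span{e₁′, e₂′}` -/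
def gm1 : Submodule ℝ (Fin 5 → ℝ) :=
  Submodule.span ℝ {Pi.single 3 1, Pi.single 4 1}

/-- `g₋₂ = span{e₀}` -/
def gm2 : Submodule ℝ (Fin 5 → ℝ) :=
  Submodule.span ℝ {Pi.single 2 1}

/-- The matrix of the standard symplectic form on ℝ⁶. -/
def J6 : Matrix (Fin 6) (Fin 6) ℝ :=
  !![0,0,0,1,0,0; 0,0,0,0,1,0; 0,0,0,0,0,1;
     -1,0,0,0,0,0; 0,-1,0,0,0,0; 0,0,-1,0,0,0]

/-- The grading element `D = diag(1,1,0,−1,−1,0)` of `sp(6,ℝ)`. -/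
def D6 : Matrix (Fin 6) (Fin 6) ℝ := Matrix.diagonal ![1, 1, 0, -1, -1, 0]

/-- `sp(6,ℝ) = {X : Xᵀ J + J X = 0}`. -/
def sp6 : Set (Matrix (Fin 6) (Fin 6) ℝ) :=
  {X | X.transpose * J6 + J6 * X = 0}

/-- The graded piece `s_k = {X ∈ sp(6,ℝ) : DX − XD = kX}`. -/
def sLevel (k : ℤ) : Set (Matrix (Fin 6) (Fin 6) ℝ) :=
  {X | X ∈ sp6 ∧ D6 * X - X * D6 = (k : ℝ) • X}


/-! ### Auxiliary material for the proof -/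

private lemma cons_val_five {α : Type*} (x : α) (u : Fin 5 → α) :
    Matrix.vecCons x u (5 : Fin 6) = u 4 := rfl
private lemma vec6_2 {α : Type*} (a b c d e f : α) : (![a,b,c,d,e,f] : Fin 6 → α) 2 = c := rfl
private lemma vec6_3 {α : Type*} (a b c d e f : α) : (![a,b,c,d,e,f] : Fin 6 → α) 3 = d := rfl
private lemma vec6_4 {α : Type*} (a b c d e f : α) : (![a,b,c,d,e,f] : Fin 6 → α) 4 = e := rfl
private lemma vec6_5 {α : Type*} (a b c d e f : α) : (![a,b,c,d,e,f] : Fin 6 → α) 5 = f := rfl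
private lemma vec5_2 {α : Type*} (a b c d e : α) : (![a,b,c,d,e] : Fin 5 → α) 2 = c := rfl
private lemma vec5_3 {α : Type*} (a b c d e : α) : (![a,b,c,d,e] : Fin 5 → α) 3 = d := rfl
private lemma vec5_4 {α : Type*} (a b c d e : α) : (![a,b,c,d,e] : Fin 5 → α) 4 = e := rfl

/-- The explicit embedding matrix. -/
def Fmat (v : Fin 5 → ℝ) : Matrix (Fin 6) (Fin 6) ℝ :=
  !![0,0,0,0,0,0;
     0,0,0,0,0,0;
     0, 3*v 2, 0, 0, 0, 6*v 3;
     0, -v 0, v 3, 0, 0, 0;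
     -v 0, -2*v 1, v 4, 0, 0, -3*v 2;
     v 3, v 4, 0, 0, 0, 0]

/-- `s_{-1}` part of `Fmat e₁′`. -/
def Nmat : Matrix (Fin 6) (Fin 6) ℝ :=
  !![0,0,0,0,0,0; 0,0,0,0,0,0; 0,0,0,0,0,0;
     0,0,1,0,0,0; 0,0,0,0,0,0; 1,0,0,0,0,0]

/-- `s_0` part of `Fmat e₁′`. -/
def Smat : Matrix (Fin 6) (Fin 6) ℝ :=
  !![0,0,0,0,0,0; 0,0,0,0,0,0; 0,0,0,0,0,6;
     0,0,0,0,0,0; 0,0,0,0,0,0; 0,0,0,0,0,0]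

set_option maxHeartbeats 1000000 in
private lemma Fmat_add (x y : Fin 5 → ℝ) : Fmat (x + y) = Fmat x + Fmat y := by
  ext i j
  fin_cases i <;> fin_cases j <;>
    simp [Fmat, cons_val_five, vec6_2, vec6_3, vec6_4, vec6_5, vec5_2, vec5_3, vec5_4, Matrix.vecHead, Matrix.vecTail] <;> ring

set_option maxHeartbeats 1000000 in
private lemma Fmat_smul (c : ℝ) (v : Fin 5 → ℝ) : Fmat (c • v) = c • Fmat v := by
  ext i j
  fin_cases i <;> fin_cases j <;>
    simp [Fmat, cons_val_five, vec6_2, vec6_3, vec6_4, vec6_5, vec5_2, vec5_3, vec5_4, Matrix.vecHead, Matrix.vecTail] <;> ring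

/-- The embedding as a linear map. -/
def fLin : (Fin 5 → ℝ) →ₗ[ℝ] Matrix (Fin 6) (Fin 6) ℝ where
  toFun := Fmat
  map_add' := Fmat_add
  map_smul' c v := by simpa using Fmat_smul c v

set_option maxHeartbeats 2000000 in
private lemma Fmat_sp6 (v : Fin 5 → ℝ) : Fmat v ∈ sp6 := by
  show (Fmat v).transpose * J6 + J6 * Fmat v = 0
  ext i j
  fin_cases i <;> fin_cases j <;>
    simp [Fmat, J6, Matrix.mul_apply, Fin.sum_univ_six, cons_val_five, vec6_2, vec6_3, vec6_4, vec6_5, vec5_2, vec5_3, vec5_4,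
      Matrix.vecHead, Matrix.vecTail] <;> ring

set_option maxHeartbeats 2000000 in
private lemma Fmat_hom (x y : Fin 5 → ℝ) :
    Fmat (gBr x y) = Fmat x * Fmat y - Fmat y * Fmat x := by
  ext i j
  fin_cases i <;> fin_cases j <;>
    simp [Fmat, gBr, Matrix.mul_apply, Fin.sum_univ_six, cons_val_five, vec6_2, vec6_3, vec6_4, vec6_5, vec5_2, vec5_3, vec5_4,
      Matrix.vecHead, Matrix.vecTail] <;> ring

set_option maxHeartbeats 1000000 in
private lemma Nmat_sp6 : Nmat ∈ sp6 := by
  show Nmat.transpose * J6 + J6 * Nmat = 0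
  ext i j
  fin_cases i <;> fin_cases j <;>
    simp [Nmat, J6, Matrix.mul_apply, Fin.sum_univ_six, cons_val_five, vec6_2, vec6_3, vec6_4, vec6_5, vec5_2, vec5_3, vec5_4,
      Matrix.vecHead, Matrix.vecTail]

set_option maxHeartbeats 1000000 in
private lemma Smat_sp6 : Smat ∈ sp6 := by
  show Smat.transpose * J6 + J6 * Smat = 0
  ext i j
  fin_cases i <;> fin_cases j <;>
    simp [Smat, J6, Matrix.mul_apply, Fin.sum_univ_six, cons_val_five, vec6_2, vec6_3, vec6_4, vec6_5, vec5_2, vec5_3, vec5_4,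
      Matrix.vecHead, Matrix.vecTail]

set_option maxHeartbeats 1000000 in
private lemma Fmat_single3 : Fmat (Pi.single 3 1) = Nmat + Smat := by
  ext i j
  fin_cases i <;> fin_cases j <;>
    simp [Fmat, Nmat, Smat, cons_val_five, vec6_2, vec6_3, vec6_4, vec6_5, vec5_2, vec5_3, vec5_4,
      Matrix.vecHead, Matrix.vecTail, Pi.single_apply]

private lemma sLevel_grading {k : ℤ} {X : Matrix (Fin 6) (Fin 6) ℝ} (hX : X ∈ sp6)
    (h : D6 * X - X * D6 = (k : ℝ) • X) : X ∈ sLevel k := ⟨hX, h⟩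

set_option maxHeartbeats 1000000 in
private lemma lev_e1 : Fmat (Pi.single 0 1) ∈ sLevel (-2) := by
  refine ⟨Fmat_sp6 _, ?_⟩
  ext i j
  fin_cases i <;> fin_cases j <;>
    simp [Fmat, D6, Matrix.diagonal_mul, Matrix.mul_diagonal, cons_val_five, vec6_2, vec6_3, vec6_4, vec6_5, vec5_2, vec5_3, vec5_4,
      Matrix.vecHead, Matrix.vecTail, Pi.single_apply, Matrix.vecMul, dotProduct,
      Fin.sum_univ_six, Matrix.diagonal_apply] <;> norm_num

set_option maxHeartbeats 1000000 in
private lemma lev_e2 : Fmat (Pi.single 1 1) ∈ sLevel (-2) := by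
  refine ⟨Fmat_sp6 _, ?_⟩
  ext i j
  fin_cases i <;> fin_cases j <;>
    simp [Fmat, D6, Matrix.diagonal_mul, Matrix.mul_diagonal, cons_val_five, vec6_2, vec6_3, vec6_4, vec6_5, vec5_2, vec5_3, vec5_4,
      Matrix.vecHead, Matrix.vecTail, Pi.single_apply, Matrix.vecMul, dotProduct,
      Fin.sum_univ_six, Matrix.diagonal_apply] <;> norm_num

set_option maxHeartbeats 1000000 in
private lemma lev_e0 : Fmat (Pi.single 2 1) ∈ sLevel (-1) := by
  refine ⟨Fmat_sp6 _, ?_⟩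
  ext i j
  fin_cases i <;> fin_cases j <;>
    simp [Fmat, D6, Matrix.diagonal_mul, Matrix.mul_diagonal, cons_val_five, vec6_2, vec6_3, vec6_4, vec6_5, vec5_2, vec5_3, vec5_4,
      Matrix.vecHead, Matrix.vecTail, Pi.single_apply, Matrix.vecMul, dotProduct,
      Fin.sum_univ_six, Matrix.diagonal_apply] <;> norm_num

set_option maxHeartbeats 1000000 in
private lemma lev_e2' : Fmat (Pi.single 4 1) ∈ sLevel (-1) := by
  refine ⟨Fmat_sp6 _, ?_⟩
  ext i j
  fin_cases i <;> fin_cases j <;>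
    simp [Fmat, D6, Matrix.diagonal_mul, Matrix.mul_diagonal, cons_val_five, vec6_2, vec6_3, vec6_4, vec6_5, vec5_2, vec5_3, vec5_4,
      Matrix.vecHead, Matrix.vecTail, Pi.single_apply, Matrix.vecMul, dotProduct,
      Fin.sum_univ_six, Matrix.diagonal_apply] <;> norm_num

set_option maxHeartbeats 1000000 in
private lemma lev_N : Nmat ∈ sLevel (-1) := by
  refine ⟨Nmat_sp6, ?_⟩
  ext i j
  fin_cases i <;> fin_cases j <;>
    simp [Nmat, D6, Matrix.diagonal_mul, Matrix.mul_diagonal, cons_val_five, vec6_2, vec6_3, vec6_4, vec6_5, vec5_2, vec5_3, vec5_4,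
      Matrix.vecHead, Matrix.vecTail, Matrix.vecMul, dotProduct,
      Fin.sum_univ_six, Matrix.diagonal_apply] <;> norm_num

set_option maxHeartbeats 1000000 in
private lemma lev_S : Smat ∈ sLevel 0 := by
  refine ⟨Smat_sp6, ?_⟩
  ext i j
  fin_cases i <;> fin_cases j <;>
    simp [Smat, D6, Matrix.diagonal_mul, Matrix.mul_diagonal, cons_val_five, vec6_2, vec6_3, vec6_4, vec6_5, vec5_2, vec5_3, vec5_4,
      Matrix.vecHead, Matrix.vecTail, Matrix.vecMul, dotProduct,
      Fin.sum_univ_six, Matrix.diagonal_apply] <;> norm_num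

private lemma sLevel_zero (k : ℤ) : (0 : Matrix (Fin 6) (Fin 6) ℝ) ∈ sLevel k := by
  refine ⟨?_, by simp⟩
  show (0 : Matrix (Fin 6) (Fin 6) ℝ).transpose * J6 + J6 * 0 = 0
  simp

private lemma sLevel_add {k : ℤ} {X Y : Matrix (Fin 6) (Fin 6) ℝ}
    (hX : X ∈ sLevel k) (hY : Y ∈ sLevel k) : X + Y ∈ sLevel k := by
  obtain ⟨hX1, hX2⟩ := hX
  obtain ⟨hY1, hY2⟩ := hY
  constructor
  · show (X + Y).transpose * J6 + J6 * (X + Y) = 0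
    have hX1' : X.transpose * J6 + J6 * X = 0 := hX1
    have hY1' : Y.transpose * J6 + J6 * Y = 0 := hY1
    calc (X + Y).transpose * J6 + J6 * (X + Y)
        = (X.transpose * J6 + J6 * X) + (Y.transpose * J6 + J6 * Y) := by
          rw [Matrix.transpose_add, Matrix.add_mul, Matrix.mul_add]; abel
      _ = 0 := by rw [hX1', hY1', add_zero]
  · calc D6 * (X + Y) - (X + Y) * D6
        = (D6 * X - X * D6) + (D6 * Y - Y * D6) := by
          rw [Matrix.mul_add, Matrix.add_mul]; abel
      _ = (k : ℝ) • X + (k : ℝ) • Y := by rw [hX2, hY2]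
      _ = (k : ℝ) • (X + Y) := by rw [smul_add]

private lemma sLevel_smul {k : ℤ} (c : ℝ) {X : Matrix (Fin 6) (Fin 6) ℝ}
    (hX : X ∈ sLevel k) : c • X ∈ sLevel k := by
  obtain ⟨hX1, hX2⟩ := hX
  constructor
  · show (c • X).transpose * J6 + J6 * (c • X) = 0
    have hX1' : X.transpose * J6 + J6 * X = 0 := hX1
    rw [Matrix.transpose_smul, Matrix.smul_mul, Matrix.mul_smul, ← smul_add, hX1', smul_zero]
  · rw [Matrix.mul_smul, Matrix.smul_mul, ← smul_sub, hX2, smul_comm]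

/-- In `sLevel k`, any entry whose grading degree differs from `k` vanishes. -/
private lemma sLevel_entry_zero {k : ℤ} {X : Matrix (Fin 6) (Fin 6) ℝ} (hX : X ∈ sLevel k)
    (i j : Fin 6) (di dj : ℝ) (hdi : (![1, 1, 0, -1, -1, 0] : Fin 6 → ℝ) i = di)
    (hdj : (![1, 1, 0, -1, -1, 0] : Fin 6 → ℝ) j = dj)
    (hne : di - dj ≠ (k : ℝ)) : X i j = 0 := by
  have h : (D6 * X - X * D6) i j = ((k : ℝ) • X) i j := by rw [hX.2]
  rw [Matrix.sub_apply, Matrix.smul_apply, D6, Matrix.diagonal_mul, Matrix.mul_diagonal,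
    hdi, hdj, smul_eq_mul] at h
  by_contra hx
  apply hne
  have h2 : (di - dj) * X i j = (k : ℝ) * X i j := by linear_combination h
  exact mul_right_cancel₀ hx h2

/-- There is an injective filtered Lie algebra embedding `f : g₋ → sp(6,ℝ)` with
`f(e₁), f(e₂) ∈ s₋₂`, `f(e₀), f(e₂′) ∈ s₋₁`, `f(e₁′) ∈ s₋₁ + s₀`, and
`f(g₋) ∩ (s₀ + s₁ + s₂) = 0`; this is the filtered embedding underlying the Pfaffian
embedding of the flat (2,3,5)-model into the isotropic Grassmannian. -/
theorem exists_filtered_embedding_g235_into_sp6 :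
    ∃ f : (Fin 5 → ℝ) →ₗ[ℝ] Matrix (Fin 6) (Fin 6) ℝ,
      Function.Injective f ∧
      -- f takes values in sp(6,ℝ)
      (∀ v, f v ∈ sp6) ∧
      -- f is a Lie algebra homomorphism into gl(6,ℝ) with the commutator bracket
      (∀ x y, f (gBr x y) = f x * f y - f y * f x) ∧
      -- placement of basis vectors:  f(e₁), f(e₂) ∈ s₋₂
      f (Pi.single 0 1) ∈ sLevel (-2) ∧ f (Pi.single 1 1) ∈ sLevel (-2) ∧
      -- f(e₀), f(e₂′) ∈ s₋₁
      f (Pi.single 2 1) ∈ sLevel (-1) ∧ f (Pi.single 4 1) ∈ sLevel (-1) ∧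
      -- f(e₁′) ∈ s₋₁ + s₀
      (∃ a ∈ sLevel (-1), ∃ c ∈ sLevel 0, f (Pi.single 3 1) = a + c) ∧
      -- f(g₋) ∩ (s₀ + s₁ + s₂) = 0
      (∀ v, (∃ a ∈ sLevel 0, ∃ b ∈ sLevel 1, ∃ c ∈ sLevel 2, f v = a + b + c) →
        f v = 0) ∧
      -- f induces an injection of g₋ into sp(6,ℝ)/(s₀ + s₁ + s₂)
      (∀ v, (∃ a ∈ sLevel 0, ∃ b ∈ sLevel 1, ∃ c ∈ sLevel 2, f v = a + b + c) →
        v = 0) ∧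
      -- filtration conditions:  f(g₋₁) ⊆ s₋₁ + s₀ + s₁ + s₂
      (∀ v ∈ gm1, ∃ a ∈ sLevel (-1), ∃ b ∈ sLevel 0, ∃ c ∈ sLevel 1,
        ∃ d ∈ sLevel 2, f v = a + b + c + d) ∧
      -- f(g₋₁ ⊕ g₋₂) ⊆ s₋₂ + s₋₁ + s₀ + s₁ + s₂
      (∀ v ∈ gm1 ⊔ gm2, ∃ a ∈ sLevel (-2), ∃ b ∈ sLevel (-1), ∃ c ∈ sLevel 0,
        ∃ d ∈ sLevel 1, ∃ e ∈ sLevel 2, f v = a + b + c + d + e) := by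
  classical
  have key : ∀ v : Fin 5 → ℝ,
      (∃ a ∈ sLevel 0, ∃ b ∈ sLevel 1, ∃ c ∈ sLevel 2, fLin v = a + b + c) → v = 0 := by
    intro v ⟨a, ha, b, hb, c, hc, heq⟩
    have heq' : Fmat v = a + b + c := heq
    have key : ∀ (i j : Fin 6) (di dj : ℝ),
        (![1, 1, 0, -1, -1, 0] : Fin 6 → ℝ) i = di →
        (![1, 1, 0, -1, -1, 0] : Fin 6 → ℝ) j = dj →
        di - dj ≠ (0 : ℝ) → di - dj ≠ (1 : ℝ) → di - dj ≠ (2 : ℝ) → Fmat v i j = 0 := by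
      intro i j di dj hdi hdj h0 h1 h2
      have := congrArg (fun M : Matrix (Fin 6) (Fin 6) ℝ => M i j) heq'
      simp only [Matrix.add_apply] at this
      rw [sLevel_entry_zero ha i j di dj hdi hdj (by exact_mod_cast h0),
        sLevel_entry_zero hb i j di dj hdi hdj (by exact_mod_cast h1),
        sLevel_entry_zero hc i j di dj hdi hdj (by exact_mod_cast h2)] at this
      simpa using this
    have h40 := key 4 0 (-1) 1 rfl rfl (by norm_num) (by norm_num) (by norm_num)
    have h41 := key 4 1 (-1) 1 rfl rfl (by norm_num) (by norm_num) (by norm_num)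
    have h21 := key 2 1 0 1 rfl rfl (by norm_num) (by norm_num) (by norm_num)
    have h50 := key 5 0 0 1 rfl rfl (by norm_num) (by norm_num) (by norm_num)
    have h51 := key 5 1 0 1 rfl rfl (by norm_num) (by norm_num) (by norm_num)
    simp [Fmat, cons_val_five, Matrix.vecHead, Matrix.vecTail] at h40 h41 h21 h50 h51
    funext i
    fin_cases i
    · show v 0 = 0; linarith
    · show v 1 = 0; linarith
    · show v 2 = 0; linarith
    · show v 3 = 0; linarith
    · show v 4 = 0; linarith
  refine ⟨fLin, ?_, Fmat_sp6, Fmat_hom, lev_e1, lev_e2, lev_e0, lev_e2',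
    ⟨Nmat, lev_N, Smat, lev_S, Fmat_single3⟩, ?_, key, ?_, ?_⟩
  · -- injectivity
    intro x y h
    have h40 : Fmat x 4 0 = Fmat y 4 0 := by
      show fLin x 4 0 = fLin y 4 0; rw [h]
    have h41 : Fmat x 4 1 = Fmat y 4 1 := by
      show fLin x 4 1 = fLin y 4 1; rw [h]
    have h21 : Fmat x 2 1 = Fmat y 2 1 := by
      show fLin x 2 1 = fLin y 2 1; rw [h]
    have h50 : Fmat x 5 0 = Fmat y 5 0 := by
      show fLin x 5 0 = fLin y 5 0; rw [h]
    have h51 : Fmat x 5 1 = Fmat y 5 1 := by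
      show fLin x 5 1 = fLin y 5 1; rw [h]
    simp [Fmat, cons_val_five, Matrix.vecHead, Matrix.vecTail] at h40 h41 h21 h50 h51
    funext i
    fin_cases i
    · show x 0 = y 0; linarith
    · show x 1 = y 1; linarith
    · show x 2 = y 2; linarith
    · show x 3 = y 3; linarith
    · show x 4 = y 4; linarith
  · -- f v ∈ s0+s1+s2 implies f v = 0
    intro v hv
    rw [key v hv]
    exact map_zero fLin
  · -- gm1 filtration
    intro v hv
    rw [gm1, Submodule.mem_span_pair] at hv
    obtain ⟨p, q, rfl⟩ := hv
    refine ⟨p • Nmat + q • Fmat (Pi.single 4 1),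
      sLevel_add (sLevel_smul p lev_N) (sLevel_smul q lev_e2'),
      p • Smat, sLevel_smul p lev_S, 0, sLevel_zero 1, 0, sLevel_zero 2, ?_⟩
    have h : fLin (p • (Pi.single 3 1 : Fin 5 → ℝ) + q • (Pi.single 4 1 : Fin 5 → ℝ))
        = p • Fmat (Pi.single 3 1) + q • Fmat (Pi.single 4 1) := by
      rw [map_add, map_smul, map_smul]; rfl
    rw [h, Fmat_single3]
    module
  · -- gm1 ⊔ gm2 filtration
    intro v hv
    obtain ⟨u, hu, w, hw, rfl⟩ := Submodule.mem_sup.mp hv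
    rw [gm1, Submodule.mem_span_pair] at hu
    obtain ⟨p, q, rfl⟩ := hu
    rw [gm2, Submodule.mem_span_singleton] at hw
    obtain ⟨r, rfl⟩ := hw
    refine ⟨0, sLevel_zero (-2),
      p • Nmat + q • Fmat (Pi.single 4 1) + r • Fmat (Pi.single 2 1),
      sLevel_add (sLevel_add (sLevel_smul p lev_N) (sLevel_smul q lev_e2'))
        (sLevel_smul r lev_e0),
      p • Smat, sLevel_smul p lev_S, 0, sLevel_zero 1, 0, sLevel_zero 2, ?_⟩
    have h : fLin (p • (Pi.single 3 1 : Fin 5 → ℝ) + q • (Pi.single 4 1 : Fin 5 → ℝ) + r • (Pi.single 2 1 : Fin 5 → ℝ))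
        = p • Fmat (Pi.single 3 1) + q • Fmat (Pi.single 4 1) + r • Fmat (Pi.single 2 1) := by
      rw [map_add, map_add, map_smul, map_smul, map_smul]; rfl
    rw [h, Fmat_single3]
    module
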